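/- Let W ∈ C²((0,∞)) satisfy W'(1) + 2W'(2) = 0. Then the Hessian of the 4-point energy E₄[V] at the unit square q has the following eigenvalues: 0 (on translations (v,v,v,v)), 4(W'(1)+W''(1)) (on (v,−v,v,−v)), 2W'(1)+4W'(2)+4W''(1)+16W''(2) (on the dilation direction q), 2W'(1)+4W'(2) (on the rotation direction (q₂,q₃,q₄,q₁)), 2W'(1)+4W'(2)+4W''(1) (on (q₄,q₃,q₂,q₁)), and 2W'(1)+4W'(2)+16W''(2) (on (q₁,q₄,q₃,q₂)). -/

import Mathlib

open scoped RealInnerProductSpace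

/-- The configuration space of 4 labeled points in the plane, with its Euclidean
(inner-product) structure. -/
abbrev Config4 : Type := PiLp 2 (fun _ : Fin 4 => EuclideanSpace ℝ (Fin 2))

/-- The 4-point energy E₄[V](x₁,…,x₄) = (1/2)∑ᵢ W(|xᵢ−xᵢ₊₁|²) + W(|x₁−x₃|²) + W(|x₂−x₄|²),
indices mod 4, where W(s) = V(√s). -/
noncomputable def energy4 (W : ℝ → ℝ) (x : Config4) : ℝ :=
  (1 / 2) * ∑ i : Fin 4, W (dist (x i) (x (i + 1)) ^ 2) +
    W (dist (x 0) (x 2) ^ 2) + W (dist (x 1) (x 3) ^ 2)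

/-- The unit square configuration q = (q₁,q₂,q₃,q₄) = (1/2)((−1,−1),(−1,1),(1,1),(1,−1)). -/
noncomputable def unitSquare : Config4 := WithLp.toLp 2 fun i =>
  (WithLp.equiv 2 (Fin 2 → ℝ)).symm
    (![![-1/2, -1/2], ![-1/2, 1/2], ![1/2, 1/2], ![1/2, -1/2]] i)

/-- The Hessian bilinear form of the 4-point energy at the unit square. -/
noncomputable def hess4 (W : ℝ → ℝ) (u w : Config4) : ℝ :=
  fderiv ℝ (fderiv ℝ (energy4 W)) unitSquare u w

/-- `u` is an eigenvector of the Hessian of E₄ at the unit square with eigenvalue `lam`. -/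
def IsHessEigen (W : ℝ → ℝ) (u : Config4) (lam : ℝ) : Prop :=
  ∀ w : Config4, hess4 W u w = lam * ⟪u, w⟫

/-!
By the chain rule, a pair term `W (‖L x‖ ^ 2)` with `L` linear has second derivative
`2 W'(r) ⟪L u, L w⟫ + 4 W''(r) ⟪L x, L u⟫ ⟪L x, L w⟫` at `x`, where `r = ‖L x‖ ^ 2`.
Writing `E₄` as `(1/2) ∑ᵢ ∑_{j = 1, 2} W (‖xᵢ - x_{i+j}‖ ^ 2)`, each diagonal counted twice,
and using `‖qᵢ - q_{i+j}‖ ^ 2 = j`, this gives the second variation formula at `q`.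
Each eigenvector claim is then a polynomial identity in the coordinates of the test vector.
-/

open Set Filter Topology

section PairPotential

variable {F E : Type*} [NormedAddCommGroup F] [InnerProductSpace ℝ F]
  [NormedAddCommGroup E] [InnerProductSpace ℝ E] (W : ℝ → ℝ) (L : F →L[ℝ] E)

noncomputable def innerPullback : F →L[ℝ] F →L[ℝ] ℝ :=
  (innerSL ℝ : E →L[ℝ] E →L[ℝ] ℝ).bilinearComp L L

@[simp] lemma innerPullback_apply (u w : F) : innerPullback L u w = ⟪L u, L w⟫ := rfl

noncomputable def pairGrad (x : F) : F →L[ℝ] ℝ :=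
  (2 * deriv W (‖L x‖ ^ 2)) • innerPullback L x

noncomputable def pairHess (x : F) : F →L[ℝ] F →L[ℝ] ℝ :=
  (2 * deriv W (‖L x‖ ^ 2)) • innerPullback L +
    ((4 * deriv (deriv W) (‖L x‖ ^ 2)) • innerPullback L x).smulRight (innerPullback L x)

lemma pairHess_apply (x u w : F) :
    pairHess W L x u w = 2 * deriv W (‖L x‖ ^ 2) * ⟪L u, L w⟫ +
      4 * deriv (deriv W) (‖L x‖ ^ 2) * ⟪L x, L u⟫ * ⟪L x, L w⟫ := by
  simp [pairHess]

variable {W}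

lemma hasFDerivAt_pairPotential {x : F}
    (hW : HasDerivAt W (deriv W (‖L x‖ ^ 2)) (‖L x‖ ^ 2)) :
    HasFDerivAt (fun y => W (‖L y‖ ^ 2)) (pairGrad W L x) x := by
  refine (hW.comp_hasFDerivAt x L.hasFDerivAt.norm_sq).congr_fderiv ?_
  ext w
  simp only [smul_apply, ContinuousLinearMap.comp_apply, coe_innerSL_apply, nsmul_eq_mul,
    Nat.cast_ofNat, smul_eq_mul, pairGrad, innerPullback_apply]
  ring

lemma hasFDerivAt_pairGrad {x : F}
    (hW : HasDerivAt (deriv W) (deriv (deriv W) (‖L x‖ ^ 2)) (‖L x‖ ^ 2)) :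
    HasFDerivAt (pairGrad W L) (pairHess W L x) x := by
  have hcoeff : HasFDerivAt (fun y => 2 * deriv W (‖L y‖ ^ 2))
      ((4 * deriv (deriv W) (‖L x‖ ^ 2)) • innerPullback L x) x := by
    refine ((hW.const_mul 2).comp_hasFDerivAt x L.hasFDerivAt.norm_sq).congr_fderiv ?_
    ext w
    simp only [smul_apply, ContinuousLinearMap.comp_apply, coe_innerSL_apply, nsmul_eq_mul,
      Nat.cast_ofNat, smul_eq_mul, innerPullback_apply]
    ring
  exact hcoeff.smul (innerPullback L).hasFDerivAt

end PairPotential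

theorem fderiv_fderiv_sum_pairPotential {F E ι : Type*} [NormedAddCommGroup F]
    [InnerProductSpace ℝ F] [NormedAddCommGroup E] [InnerProductSpace ℝ E] {W : ℝ → ℝ}
    (hW : ContDiffOn ℝ 2 W (Ioi 0)) (s : Finset ι) (c : ι → ℝ) (L : ι → F →L[ℝ] E) {x₀ : F}
    (hx₀ : ∀ i ∈ s, L i x₀ ≠ 0) :
    fderiv ℝ (fderiv ℝ fun x => ∑ i ∈ s, c i * W (‖L i x‖ ^ 2)) x₀ =
      ∑ i ∈ s, c i • pairHess W (L i) x₀ := by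
  have hW' : ContDiffOn ℝ 1 (deriv W) (Ioi 0) := hW.deriv_of_isOpen isOpen_Ioi (by norm_num)
  have hpos : ∀ {i x}, L i x ≠ 0 → ‖L i x‖ ^ 2 ∈ Ioi 0 := fun h => pow_pos (norm_pos_iff.2 h) 2
  have hgrad : fderiv ℝ (fun x => ∑ i ∈ s, c i * W (‖L i x‖ ^ 2)) =ᶠ[𝓝 x₀]
      fun x => ∑ i ∈ s, c i • pairGrad W (L i) x := by
    have hne : ∀ᶠ x in 𝓝 x₀, ∀ i ∈ s, L i x ≠ 0 := (eventually_all_finset s).2 fun i hi =>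
      (L i).continuous.continuousAt.eventually_ne (hx₀ i hi)
    filter_upwards [hne] with x hx
    refine (HasFDerivAt.fun_sum fun i hi => ?_).fderiv
    exact (hasFDerivAt_pairPotential _ ((hW.differentiableOn (by norm_num)).differentiableAt
      (isOpen_Ioi.mem_nhds (hpos (hx i hi)))).hasDerivAt).const_mul (c i)
  rw [hgrad.fderiv_eq]
  refine (HasFDerivAt.fun_sum fun i hi => ?_).fderiv
  exact (hasFDerivAt_pairGrad _ ((hW'.differentiableOn one_ne_zero).differentiableAt
    (isOpen_Ioi.mem_nhds (hpos (hx₀ i hi)))).hasDerivAt).const_smul (c i)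

abbrev E2 := EuclideanSpace ℝ (Fin 2)

noncomputable def bond (i j : Fin 4) : Config4 →L[ℝ] E2 :=
  PiLp.proj (𝕜 := ℝ) 2 (fun _ : Fin 4 => E2) i - PiLp.proj (𝕜 := ℝ) 2 (fun _ : Fin 4 => E2) j

@[simp] lemma bond_apply (i j : Fin 4) (x : Config4) : bond i j x = x i - x j := rfl

lemma energy4_eq_sum (W : ℝ → ℝ) : energy4 W = fun x =>
    ∑ p ∈ Finset.univ ×ˢ {1, 2}, (1 / 2 : ℝ) * W (‖bond p.1 (p.1 + p.2) x‖ ^ 2) := by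
  funext x
  simp only [energy4, dist_eq_norm, Fin.sum_univ_four, Fin.reduceAdd, bond_apply,
    Finset.sum_product, Finset.sum_pair (show (1 : Fin 4) ≠ 2 by decide),
    norm_sub_rev (x 2) (x 0), norm_sub_rev (x 3) (x 1)]
  ring

lemma inner_eq_coords (a b : E2) : ⟪a, b⟫ = a 0 * b 0 + a 1 * b 1 := by
  simp [PiLp.inner_apply, Fin.sum_univ_two, mul_comm]

lemma unitSquare_side (i : Fin 4) : ‖unitSquare i - unitSquare (i + 1)‖ ^ 2 = 1 := by
  rw [← real_inner_self_eq_norm_sq, inner_eq_coords]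
  fin_cases i <;>
    simp only [Fin.reduceFinMk, Fin.reduceAdd, PiLp.sub_apply, unitSquare,
      WithLp.equiv_symm_apply, Matrix.cons_val] <;>
    norm_num

lemma unitSquare_diag (i : Fin 4) : ‖unitSquare i - unitSquare (i + 2)‖ ^ 2 = 2 := by
  rw [← real_inner_self_eq_norm_sq, inner_eq_coords]
  fin_cases i <;>
    simp only [Fin.reduceFinMk, Fin.reduceAdd, PiLp.sub_apply, unitSquare,
      WithLp.equiv_symm_apply, Matrix.cons_val] <;>
    norm_num

theorem hess4_eq {W : ℝ → ℝ} (hW : ContDiffOn ℝ 2 W (Ioi 0)) (u w : Config4) :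
    hess4 W u w = ∑ i : Fin 4,
      (deriv W 1 * ⟪u i - u (i + 1), w i - w (i + 1)⟫ +
        2 * deriv (deriv W) 1 * ⟪unitSquare i - unitSquare (i + 1), u i - u (i + 1)⟫ *
          ⟪unitSquare i - unitSquare (i + 1), w i - w (i + 1)⟫ +
      deriv W 2 * ⟪u i - u (i + 2), w i - w (i + 2)⟫ +
        2 * deriv (deriv W) 2 * ⟪unitSquare i - unitSquare (i + 2), u i - u (i + 2)⟫ *
          ⟪unitSquare i - unitSquare (i + 2), w i - w (i + 2)⟫) := by
  have hne : ∀ p ∈ (Finset.univ ×ˢ {1, 2} : Finset (Fin 4 × Fin 4)),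
      bond p.1 (p.1 + p.2) unitSquare ≠ 0 := by
    simp only [Finset.mem_product, Finset.mem_univ, true_and, Finset.mem_insert,
      Finset.mem_singleton]
    rintro ⟨i, j⟩ (rfl | rfl)
    · rw [bond_apply, ← norm_ne_zero_iff, ← pow_ne_zero_iff two_ne_zero, unitSquare_side]
      exact one_ne_zero
    · rw [bond_apply, ← norm_ne_zero_iff, ← pow_ne_zero_iff two_ne_zero, unitSquare_diag]
      exact two_ne_zero
  rw [hess4, energy4_eq_sum, fderiv_fderiv_sum_pairPotential hW _ _ _ hne, Finset.sum_product]
  simp only [sum_apply, Finset.sum_pair (show (1 : Fin 4) ≠ 2 by decide), add_apply,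
    smul_apply, pairHess_apply, bond_apply, smul_eq_mul, unitSquare_side, unitSquare_diag]
  refine Finset.sum_congr rfl fun i _ => ?_
  ring

section Eigenvectors

variable {W : ℝ → ℝ}

lemma isHessEigen_translation (hW : ContDiffOn ℝ 2 W (Ioi 0)) (v : E2) :
    IsHessEigen W (WithLp.toLp 2 fun _ => v) 0 := by
  intro w
  simp [hess4_eq hW]

lemma isHessEigen_alternating (hW : ContDiffOn ℝ 2 W (Ioi 0)) (v : E2) :
    IsHessEigen W (WithLp.toLp 2 ![v, -v, v, -v]) (4 * (deriv W 1 + deriv (deriv W) 1)) := by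
  intro w
  rw [hess4_eq hW, PiLp.inner_apply]
  simp only [Fin.sum_univ_four, Fin.reduceAdd, inner_eq_coords, PiLp.sub_apply, PiLp.neg_apply,
    unitSquare, WithLp.equiv_symm_apply, Matrix.cons_val]
  ring

lemma isHessEigen_dilation (hW : ContDiffOn ℝ 2 W (Ioi 0)) :
    IsHessEigen W unitSquare
      (2 * deriv W 1 + 4 * deriv W 2 + 4 * deriv (deriv W) 1 + 16 * deriv (deriv W) 2) := by
  intro w
  rw [hess4_eq hW, PiLp.inner_apply]
  simp only [Fin.sum_univ_four, Fin.reduceAdd, inner_eq_coords, PiLp.sub_apply,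
    unitSquare, WithLp.equiv_symm_apply, Matrix.cons_val]
  ring

lemma isHessEigen_rotation (hW : ContDiffOn ℝ 2 W (Ioi 0)) :
    IsHessEigen W (WithLp.toLp 2 ![unitSquare 1, unitSquare 2, unitSquare 3, unitSquare 0])
      (2 * deriv W 1 + 4 * deriv W 2) := by
  intro w
  rw [hess4_eq hW, PiLp.inner_apply]
  simp only [Fin.sum_univ_four, Fin.reduceAdd, inner_eq_coords, PiLp.sub_apply,
    unitSquare, WithLp.equiv_symm_apply, Matrix.cons_val]
  ring

lemma isHessEigen_axisReflection (hW : ContDiffOn ℝ 2 W (Ioi 0)) :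
    IsHessEigen W (WithLp.toLp 2 ![unitSquare 3, unitSquare 2, unitSquare 1, unitSquare 0])
      (2 * deriv W 1 + 4 * deriv W 2 + 4 * deriv (deriv W) 1) := by
  intro w
  rw [hess4_eq hW, PiLp.inner_apply]
  simp only [Fin.sum_univ_four, Fin.reduceAdd, inner_eq_coords, PiLp.sub_apply,
    unitSquare, WithLp.equiv_symm_apply, Matrix.cons_val]
  ring

lemma isHessEigen_diagonalReflection (hW : ContDiffOn ℝ 2 W (Ioi 0)) :
    IsHessEigen W (WithLp.toLp 2 ![unitSquare 0, unitSquare 3, unitSquare 2, unitSquare 1])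
      (2 * deriv W 1 + 4 * deriv W 2 + 16 * deriv (deriv W) 2) := by
  intro w
  rw [hess4_eq hW, PiLp.inner_apply]
  simp only [Fin.sum_univ_four, Fin.reduceAdd, inner_eq_coords, PiLp.sub_apply,
    unitSquare, WithLp.equiv_symm_apply, Matrix.cons_val]
  ring

end Eigenvectors

theorem hessian_eigenvalues_unit_square_general (W : ℝ → ℝ)
    (hW : ContDiffOn ℝ 2 W (Set.Ioi 0)) :
    (∀ v : EuclideanSpace ℝ (Fin 2),
        IsHessEigen W (WithLp.toLp 2 fun _ => v) 0) ∧
      (∀ v : EuclideanSpace ℝ (Fin 2),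
        IsHessEigen W (WithLp.toLp 2 ![v, -v, v, -v])
          (4 * (deriv W 1 + deriv (deriv W) 1))) ∧
      IsHessEigen W unitSquare
        (2 * deriv W 1 + 4 * deriv W 2 + 4 * deriv (deriv W) 1 + 16 * deriv (deriv W) 2) ∧
      IsHessEigen W (WithLp.toLp 2 ![unitSquare 1, unitSquare 2, unitSquare 3, unitSquare 0])
        (2 * deriv W 1 + 4 * deriv W 2) ∧
      IsHessEigen W (WithLp.toLp 2 ![unitSquare 3, unitSquare 2, unitSquare 1, unitSquare 0])
        (2 * deriv W 1 + 4 * deriv W 2 + 4 * deriv (deriv W) 1) ∧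
      IsHessEigen W (WithLp.toLp 2 ![unitSquare 0, unitSquare 3, unitSquare 2, unitSquare 1])
        (2 * deriv W 1 + 4 * deriv W 2 + 16 * deriv (deriv W) 2) :=
  ⟨isHessEigen_translation hW, isHessEigen_alternating hW, isHessEigen_dilation hW,
    isHessEigen_rotation hW, isHessEigen_axisReflection hW, isHessEigen_diagonalReflection hW⟩

/-- Eigenvalues and eigenvectors of the Hessian of E₄[V] at the unit square for a C²
potential W with W'(1) + 2W'(2) = 0: 0 on translations; 4(W'(1)+W''(1)) on (v,−v,v,−v);
2W'(1)+4W'(2)+4W''(1)+16W''(2) on the dilation direction q;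
2W'(1)+4W'(2) on the rotation direction (q₂,q₃,q₄,q₁);
2W'(1)+4W'(2)+4W''(1) on (q₄,q₃,q₂,q₁); 2W'(1)+4W'(2)+16W''(2) on (q₁,q₄,q₃,q₂). -/
theorem hessian_eigenvalues_unit_square (W : ℝ → ℝ)
    (hW : ContDiffOn ℝ 2 W (Set.Ioi 0))
    (hcrit : deriv W 1 + 2 * deriv W 2 = 0) :
    (∀ v : EuclideanSpace ℝ (Fin 2),
        IsHessEigen W (WithLp.toLp 2 fun _ => v) 0) ∧
      (∀ v : EuclideanSpace ℝ (Fin 2),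
        IsHessEigen W (WithLp.toLp 2 ![v, -v, v, -v])
          (4 * (deriv W 1 + deriv (deriv W) 1))) ∧
      IsHessEigen W unitSquare
        (2 * deriv W 1 + 4 * deriv W 2 + 4 * deriv (deriv W) 1 + 16 * deriv (deriv W) 2) ∧
      IsHessEigen W (WithLp.toLp 2 ![unitSquare 1, unitSquare 2, unitSquare 3, unitSquare 0])
        (2 * deriv W 1 + 4 * deriv W 2) ∧
      IsHessEigen W (WithLp.toLp 2 ![unitSquare 3, unitSquare 2, unitSquare 1, unitSquare 0])
        (2 * deriv W 1 + 4 * deriv W 2 + 4 * deriv (deriv W) 1) ∧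
      IsHessEigen W (WithLp.toLp 2 ![unitSquare 0, unitSquare 3, unitSquare 2, unitSquare 1])
        (2 * deriv W 1 + 4 * deriv W 2 + 16 * deriv (deriv W) 2) :=
  hessian_eigenvalues_unit_square_general W hW
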